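/- Let j ≥ 2, let φ ∈ C¹[0,1] with φ(x) ≥ 0 and φ'(x) ≥ 0 on [0,1], and define f(x) = ∫_0^x t^{j−1} φ(t) dt. Then f ≤ B_{n,j} f ≤ B_n f pointwise on [0,1] for all n ≥ j. -/

import Mathlib

open Set Finset

/-- Bernstein basis polynomial `p_{n,k}(x) = C(n,k) x^k (1-x)^{n-k}`. -/
noncomputable def bp (n k : ℕ) (x : ℝ) : ℝ :=
  (n.choose k : ℝ) * x ^ k * (1 - x) ^ (n - k)

/-- AKR node `t_{n,k}^j = (k(k-1)⋯(k-j+1)/(n(n-1)⋯(n-j+1)))^{1/j}`. -/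
noncomputable def akrNode (n j k : ℕ) : ℝ :=
  ((∏ i ∈ Finset.range j, ((k : ℝ) - i)) / (∏ i ∈ Finset.range j, ((n : ℝ) - i))) ^ ((j : ℝ)⁻¹)

/-- Classical Bernstein operator. -/
noncomputable def bern (n : ℕ) (f : ℝ → ℝ) (x : ℝ) : ℝ :=
  ∑ k ∈ Finset.range (n + 1), f ((k : ℝ) / n) * bp n k x

/-- Aldaz–Kounchev–Render operator. -/
noncomputable def akr (n j : ℕ) (f : ℝ → ℝ) (x : ℝ) : ℝ :=
  ∑ k ∈ Finset.range (n + 1), f (akrNode n j k) * bp n k x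

/-- Bivariate tensor-product Bernstein operator. -/
noncomputable def bern2 (n m : ℕ) (f : ℝ → ℝ → ℝ) (x y : ℝ) : ℝ :=
  ∑ i ∈ Finset.range (n + 1), ∑ k ∈ Finset.range (m + 1),
    f ((i : ℝ) / n) ((k : ℝ) / m) * bp n i x * bp m k y

/-- Bivariate tensor-product AKR operator. -/
noncomputable def akr2 (n m j : ℕ) (f : ℝ → ℝ → ℝ) (x y : ℝ) : ℝ :=
  ∑ i ∈ Finset.range (n + 1), ∑ k ∈ Finset.range (m + 1),
    f (akrNode n j i) (akrNode m j k) * bp n i x * bp m k y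

/-!
The operator `B_{n,j}` reproduces `x ^ j`: with the falling factorials `k^(j) = k(k-1)⋯(k-j+1)`,
the binomial factorial moments are `∑ k^(j) p_{n,k}(x) = n^(j) x ^ j`, and
`(t_{n,k}^j) ^ j = k^(j) / n^(j)`. Hence Jensen's inequality yields `f ≤ B_{n,j} f` for every `f`
such that `y ↦ f (y ^ (1/j))` is convex on `[0,1]`; for `f = ∫₀ˣ t ^ (j-1) φ` the derivative of
that function is `φ (y ^ (1/j)) / j`, nondecreasing. The second inequality holds because `f` is
nondecreasing and `t_{n,k}^j ≤ k / n`, which follows factor by factor from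
`(k - i) / (n - i) ≤ k / n`.
-/

lemma bp_nonneg (n k : ℕ) {x : ℝ} (hx : x ∈ Icc (0 : ℝ) 1) : 0 ≤ bp n k x :=
  mul_nonneg (mul_nonneg (Nat.cast_nonneg _) (pow_nonneg hx.1 _)) (pow_nonneg (sub_nonneg.2 hx.2) _)

lemma sum_bp (n : ℕ) (x : ℝ) : ∑ k ∈ range (n + 1), bp n k x = 1 := by
  have hbinom := add_pow x (1 - x) n
  rw [add_sub_cancel, one_pow] at hbinom
  rw [hbinom]
  exact sum_congr rfl fun k _ => by rw [bp]; ring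

lemma Nat.descFactorial_mul_choose {j k : ℕ} (hjk : j ≤ k) (n : ℕ) :
    k.descFactorial j * n.choose k = n.descFactorial j * (n - j).choose (k - j) := by
  rw [Nat.descFactorial_eq_factorial_mul_choose, Nat.descFactorial_eq_factorial_mul_choose,
    mul_assoc, mul_comm (k.choose j), Nat.choose_mul hjk, mul_assoc]

lemma sum_descFactorial_mul_bp {j n : ℕ} (hjn : j ≤ n) (x : ℝ) :
    ∑ k ∈ range (n + 1), (k.descFactorial j : ℝ) * bp n k x = n.descFactorial j * x ^ j := by
  have hlow : ∑ k ∈ range j, (k.descFactorial j : ℝ) * bp n k x = 0 :=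
    sum_eq_zero fun k hk => by
      rw [Nat.descFactorial_eq_zero_iff_lt.mpr (mem_range.mp hk), Nat.cast_zero, zero_mul]
  have hterm : ∀ m ∈ range (n - j + 1), ((j + m).descFactorial j : ℝ) * bp n (j + m) x
      = n.descFactorial j * x ^ j * bp (n - j) m x := by
    intro m _
    have hchoose := Nat.descFactorial_mul_choose (Nat.le_add_right j m) n
    rw [Nat.add_sub_cancel_left] at hchoose
    have hchoose' : ((j + m).descFactorial j : ℝ) * n.choose (j + m)
        = n.descFactorial j * (n - j).choose m := by exact_mod_cast hchoose
    simp only [bp, Nat.sub_add_eq, pow_add]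
    linear_combination x ^ j * x ^ m * (1 - x) ^ (n - j - m) * hchoose'
  rw [← sum_range_add_sum_Ico _ (by omega : j ≤ n + 1), hlow, zero_add, sum_Ico_eq_sum_range,
    show n + 1 - j = n - j + 1 by omega, sum_congr rfl hterm, ← mul_sum, sum_bp, mul_one]

lemma prod_range_natCast_sub (k j : ℕ) :
    ∏ i ∈ range j, ((k : ℝ) - i) = k.descFactorial j := by
  induction j with
  | zero => simp
  | succ j ih =>
    rw [prod_range_succ, ih, Nat.descFactorial_succ]
    rcases lt_or_ge k j with hkj | hjk
    · simp [Nat.descFactorial_eq_zero_iff_lt.mpr hkj]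
    · push_cast [hjk]
      ring

lemma akrNode_eq (n j k : ℕ) :
    akrNode n j k = ((k.descFactorial j : ℝ) / n.descFactorial j) ^ (j : ℝ)⁻¹ := by
  simp only [akrNode, prod_range_natCast_sub]

lemma Nat.descFactorial_mul_pow_le {k n : ℕ} (hkn : k ≤ n) (j : ℕ) :
    k.descFactorial j * n ^ j ≤ n.descFactorial j * k ^ j := by
  induction j with
  | zero => simp
  | succ j ih =>
    have hfactor : (k - j) * n ≤ (n - j) * k := by
      rw [Nat.sub_mul, Nat.sub_mul, mul_comm n k]
      exact Nat.sub_le_sub_left (Nat.mul_le_mul_left j hkn) _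
    calc k.descFactorial (j + 1) * n ^ (j + 1)
        = ((k - j) * n) * (k.descFactorial j * n ^ j) := by rw [Nat.descFactorial_succ]; ring
      _ ≤ ((n - j) * k) * (n.descFactorial j * k ^ j) := Nat.mul_le_mul hfactor ih
      _ = n.descFactorial (j + 1) * k ^ (j + 1) := by rw [Nat.descFactorial_succ]; ring

lemma descFactorial_div_descFactorial_le {j k n : ℕ} (hjn : j ≤ n) (hkn : k ≤ n) :
    (k.descFactorial j : ℝ) / n.descFactorial j ≤ ((k : ℝ) / n) ^ j := by
  have hdesc : (0 : ℝ) < n.descFactorial j := by exact_mod_cast Nat.descFactorial_pos.mpr hjn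
  -- `n ^ j ≥ n.descFactorial j > 0` also covers `n = j = 0`
  have hpow : (0 : ℝ) < (n : ℝ) ^ j :=
    hdesc.trans_le (by exact_mod_cast Nat.descFactorial_le_pow n j)
  rw [div_pow, div_le_div_iff₀ hdesc hpow, mul_comm ((k : ℝ) ^ j)]
  exact_mod_cast Nat.descFactorial_mul_pow_le hkn j

lemma akrNode_nonneg (n j k : ℕ) : 0 ≤ akrNode n j k := by
  rw [akrNode_eq]
  positivity

lemma akrNode_le {j k n : ℕ} (hj : j ≠ 0) (hjn : j ≤ n) (hkn : k ≤ n) :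
    akrNode n j k ≤ k / n := by
  rw [akrNode_eq, ← Real.pow_rpow_inv_natCast (by positivity : (0 : ℝ) ≤ k / n) hj]
  exact Real.rpow_le_rpow (by positivity) (descFactorial_div_descFactorial_le hjn hkn)
    (by positivity)

lemma akrNode_mem_Icc {j k n : ℕ} (hj : j ≠ 0) (hjn : j ≤ n) (hkn : k ≤ n) :
    akrNode n j k ∈ Icc (0 : ℝ) 1 :=
  ⟨akrNode_nonneg n j k,
    (akrNode_le hj hjn hkn).trans (div_le_one_of_le₀ (by exact_mod_cast hkn) (Nat.cast_nonneg n))⟩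

lemma akr_pow_self {j n : ℕ} (hj : j ≠ 0) (hjn : j ≤ n) (x : ℝ) :
    akr n j (· ^ j) x = x ^ j := by
  have hdesc : (n.descFactorial j : ℝ) ≠ 0 := by exact_mod_cast (Nat.descFactorial_pos.mpr hjn).ne'
  have hnode : ∀ k, akrNode n j k ^ j = (k.descFactorial j : ℝ) / n.descFactorial j := fun k => by
    rw [akrNode_eq, Real.rpow_inv_natCast_pow (by positivity) hj]
  simp only [akr, hnode, div_mul_eq_mul_div, ← sum_div, sum_descFactorial_mul_bp hjn]
  field_simp

lemma le_akr_of_convexOn {j n : ℕ} (hj : j ≠ 0) (hjn : j ≤ n) {F : ℝ → ℝ}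
    (hF : ConvexOn ℝ (Icc 0 1) fun y => F (y ^ (j : ℝ)⁻¹)) {x : ℝ} (hx : x ∈ Icc (0 : ℝ) 1) :
    F x ≤ akr n j F x := by
  have hjensen := hF.map_sum_le (t := range (n + 1)) (w := fun k => bp n k x)
    (p := fun k => akrNode n j k ^ j) (fun k _ => bp_nonneg n k hx) (sum_bp n x)
    fun k hk => by
      obtain ⟨h0, h1⟩ := akrNode_mem_Icc hj hjn (Nat.lt_succ_iff.mp (mem_range.mp hk))
      exact ⟨pow_nonneg h0 j, pow_le_one₀ h0 h1⟩
  have hmean : ∑ k ∈ range (n + 1), bp n k x • akrNode n j k ^ j = x ^ j := by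
    simpa only [akr, smul_eq_mul, mul_comm] using akr_pow_self hj hjn x
  rw [hmean, Real.pow_rpow_inv_natCast hx.1 hj] at hjensen
  simpa only [akr, smul_eq_mul, mul_comm, Real.pow_rpow_inv_natCast (akrNode_nonneg n j _) hj]
    using hjensen

lemma akr_le_bern_of_monotoneOn {j n : ℕ} (hj : j ≠ 0) (hjn : j ≤ n) {F : ℝ → ℝ}
    (hF : MonotoneOn F (Icc 0 1)) {x : ℝ} (hx : x ∈ Icc (0 : ℝ) 1) :
    akr n j F x ≤ bern n F x := by
  refine sum_le_sum fun k hk => mul_le_mul_of_nonneg_right ?_ (bp_nonneg n k hx)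
  have hkn : k ≤ n := Nat.lt_succ_iff.mp (mem_range.mp hk)
  exact hF (akrNode_mem_Icc hj hjn hkn)
    ⟨by positivity, div_le_one_of_le₀ (by exact_mod_cast hkn) (Nat.cast_nonneg n)⟩
    (akrNode_le hj hjn hkn)

lemma continuousOn_primitive_Icc {ψ : ℝ → ℝ} {a b : ℝ} (hab : a ≤ b)
    (hψ : ContinuousOn ψ (Icc a b)) : ContinuousOn (fun u => ∫ t in a..u, ψ t) (Icc a b) := by
  rw [← uIcc_of_le hab] at hψ ⊢
  exact intervalIntegral.continuousOn_primitive_interval' hψ.intervalIntegrable left_mem_uIcc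

lemma hasDerivAt_primitive_of_mem_Ioo {ψ : ℝ → ℝ} {a b u : ℝ} (hψ : ContinuousOn ψ (Icc a b))
    (hu : u ∈ Ioo a b) : HasDerivAt (fun v => ∫ t in a..v, ψ t) (ψ u) u :=
  intervalIntegral.integral_hasDerivAt_right
    ((hψ.mono (uIcc_subset_Icc (left_mem_Icc.mpr (hu.1.trans hu.2).le)
      (Ioo_subset_Icc_self hu))).intervalIntegrable)
    ((hψ.mono Ioo_subset_Icc_self).stronglyMeasurableAtFilter isOpen_Ioo u hu)
    (hψ.continuousAt (Icc_mem_nhds hu.1 hu.2))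

lemma hasDerivAt_comp_rpow_inv {j : ℕ} (hj : j ≠ 0) {F φ : ℝ → ℝ}
    (hF : ∀ u ∈ Ioo (0 : ℝ) 1, HasDerivAt F (u ^ (j - 1) * φ u) u) {y : ℝ}
    (hy : y ∈ Ioo (0 : ℝ) 1) :
    HasDerivAt (fun y => F (y ^ (j : ℝ)⁻¹)) ((j : ℝ)⁻¹ * φ (y ^ (j : ℝ)⁻¹)) y := by
  set u := y ^ (j : ℝ)⁻¹
  have hu : u ∈ Ioo (0 : ℝ) 1 :=
    ⟨Real.rpow_pos_of_pos hy.1 _, Real.rpow_lt_one hy.1.le hy.2 (by positivity)⟩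
  have hchain := (hF u hu).comp y (Real.hasDerivAt_rpow_const (p := (j : ℝ)⁻¹) (Or.inl hy.1.ne'))
  -- `u ^ j = y` collapses the chain rule factor `u ^ (j - 1) * (u / y)` to `1`
  have hcancel : u ^ (j - 1) * (u / y) = 1 := by
    rw [← mul_div_assoc, pow_sub_one_mul hj, Real.rpow_inv_natCast_pow hy.1.le hj,
      div_self hy.1.ne']
  refine hchain.congr_deriv ?_
  rw [Real.rpow_sub_one hy.1.ne']
  linear_combination (j : ℝ)⁻¹ * φ u * hcancel

lemma convexOn_comp_rpow_inv {j : ℕ} (hj : j ≠ 0) {F φ : ℝ → ℝ}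
    (hFc : ContinuousOn F (Icc 0 1))
    (hF : ∀ u ∈ Ioo (0 : ℝ) 1, HasDerivAt F (u ^ (j - 1) * φ u) u)
    (hφ : MonotoneOn φ (Ioo 0 1)) :
    ConvexOn ℝ (Icc 0 1) fun y => F (y ^ (j : ℝ)⁻¹) := by
  have hroot : MapsTo (fun y : ℝ => y ^ (j : ℝ)⁻¹) (Ioo 0 1) (Ioo 0 1) := fun y hy =>
    ⟨Real.rpow_pos_of_pos hy.1 _, Real.rpow_lt_one hy.1.le hy.2 (by positivity)⟩
  refine MonotoneOn.convexOn_of_deriv (convex_Icc 0 1) ?_ ?_ ?_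
  · refine hFc.comp (Real.continuous_rpow_const (by positivity)).continuousOn fun y hy => ?_
    exact ⟨Real.rpow_nonneg hy.1 _, Real.rpow_le_one hy.1 hy.2 (by positivity)⟩
  · rw [interior_Icc]
    exact fun y hy => (hasDerivAt_comp_rpow_inv hj hF hy).differentiableAt.differentiableWithinAt
  · rw [interior_Icc]
    intro y hy z hz hyz
    rw [(hasDerivAt_comp_rpow_inv hj hF hy).deriv, (hasDerivAt_comp_rpow_inv hj hF hz).deriv]
    exact mul_le_mul_of_nonneg_left
      (hφ (hroot hy) (hroot hz) (Real.rpow_le_rpow hy.1.le hyz (by positivity))) (by positivity)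

theorem stmt9_general (j n : ℕ) (hj : 2 ≤ j) (hn : j ≤ n) (φ φ' : ℝ → ℝ)
    (hφ' : ∀ x ∈ Icc (0:ℝ) 1, HasDerivWithinAt φ (φ' x) (Icc 0 1) x)
    (hφ0 : ∀ x ∈ Icc (0:ℝ) 1, 0 ≤ φ x)
    (hφ'0 : ∀ x ∈ Icc (0:ℝ) 1, 0 ≤ φ' x)
    (f : ℝ → ℝ) (hf : f = fun u => ∫ t in (0:ℝ)..u, t ^ (j - 1) * φ t) :
    ∀ x ∈ Icc (0:ℝ) 1, f x ≤ akr n j f x ∧ akr n j f x ≤ bern n f x := by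
  have hj0 : j ≠ 0 := by omega
  have hφc : ContinuousOn φ (Icc 0 1) := fun x hx => (hφ' x hx).continuousWithinAt
  have hφmono : MonotoneOn φ (Icc 0 1) :=
    monotoneOn_of_hasDerivWithinAt_nonneg (convex_Icc 0 1) hφc
      (fun x hx => (hφ' x (interior_subset hx)).mono interior_subset)
      (fun x hx => hφ'0 x (interior_subset hx))
  have hψ : ContinuousOn (fun t : ℝ => t ^ (j - 1) * φ t) (Icc 0 1) :=
    (continuousOn_id.pow _).mul hφc
  have hfc : ContinuousOn f (Icc 0 1) := hf ▸ continuousOn_primitive_Icc zero_le_one hψ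
  have hf' : ∀ u ∈ Ioo (0 : ℝ) 1, HasDerivAt f (u ^ (j - 1) * φ u) u :=
    hf ▸ fun u hu => hasDerivAt_primitive_of_mem_Ioo hψ hu
  have hfmono : MonotoneOn f (Icc 0 1) := by
    refine monotoneOn_of_hasDerivWithinAt_nonneg (convex_Icc 0 1) hfc
      (f' := fun u => u ^ (j - 1) * φ u) ?_ ?_ <;> rw [interior_Icc]
    · exact fun u hu => (hf' u hu).hasDerivWithinAt
    · exact fun u hu => mul_nonneg (pow_nonneg hu.1.le _) (hφ0 u (Ioo_subset_Icc_self hu))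
  intro x hx
  exact ⟨le_akr_of_convexOn hj0 hn
      (convexOn_comp_rpow_inv hj0 hfc hf' (hφmono.mono Ioo_subset_Icc_self)) hx,
    akr_le_bern_of_monotoneOn hj0 hn hfmono hx⟩

theorem stmt9 (j n : ℕ) (hj : 2 ≤ j) (hn : j ≤ n) (φ φ' : ℝ → ℝ)
    (hφ' : ∀ x ∈ Icc (0:ℝ) 1, HasDerivWithinAt φ (φ' x) (Icc 0 1) x)
    (hφ'c : ContinuousOn φ' (Icc 0 1))
    (hφ0 : ∀ x ∈ Icc (0:ℝ) 1, 0 ≤ φ x)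
    (hφ'0 : ∀ x ∈ Icc (0:ℝ) 1, 0 ≤ φ' x)
    (f : ℝ → ℝ) (hf : f = fun u => ∫ t in (0:ℝ)..u, t ^ (j - 1) * φ t) :
    ∀ x ∈ Icc (0:ℝ) 1, f x ≤ akr n j f x ∧ akr n j f x ≤ bern n f x :=
  stmt9_general j n hj hn φ φ' hφ' hφ0 hφ'0 f hf
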